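/- Let τ ∈ [0,1), n ≥ 1, and let b ≥ c > 0 be reals; set y = √(bc), δ = b − c, let x be real and z = x + i·y. Let X₂ be a real n×n matrix such that the complex matrix M = z·1 − X₂ (with X₂ coerced entrywise to ℂ) is invertible, and set B = M† M, where M† is the conjugate transpose. Define c̃₁ = (1/4)(2 + (δ² + 2y²)/y²), c̃₂ = (1/2)(1 + c/b), and for w₁, w₂ ∈ ℝⁿ set S(w₁,w₂) = (1/2) (w₁ − i√(b/c)·w₂)ᵀ B⁻¹ (w₁ + i√(b/c)·w₂). Then the iterated Gaussian average ⟨⟨ c̃₁ + c̃₂ · S(w₁,w₂) ⟩_{w₂}⟩_{w₁} equals (1/2)(2 + δ²/(2y²)) · (1 + (1−τ²) Tr(B⁻¹)). -/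

import Mathlib

/-! Up to its normalisation, `gAvg τ n` is the expectation under the product of `n` centred
Gaussians of variance `v = 1 - τ²`, whose coordinates satisfy `⟨w_i⟩ = 0` and
`⟨w_i w_j⟩ = v δ_ij`. Hence a bilinear form `(p + q w)ᵀ R (r + s w)` averages to
`pᵀ R r + q s v Tr R`. Averaging first over `w₂`, where `q s = -(iκ)(iκ) = κ² = b/c` for
`κ = √(b/c)`, and then over `w₁` gives `c̃₁ + v (c̃₂/2)(b/c + 1) Tr B⁻¹`; both `c̃₁` and
`(c̃₂/2)(b/c + 1)` equal `1 + δ²/(4y²)`. -/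

open MeasureTheory Matrix Finset

/-- Gaussian average `⟨A⟩_w = (2π(1−τ²))^{-n/2} ∫_{ℝⁿ} exp(−‖w‖²/(2(1−τ²))) A(w) dw`. -/
noncomputable def gAvg (τ : ℝ) (n : ℕ) (A : (Fin n → ℝ) → ℂ) : ℂ :=
  (((Real.sqrt (2 * Real.pi * (1 - τ ^ 2)) : ℝ) : ℂ) ^ n)⁻¹ *
    ∫ w : Fin n → ℝ,
      (Real.exp (-(∑ i, (w i) ^ 2) / (2 * (1 - τ ^ 2))) : ℂ) * A w

open ProbabilityTheory
open scoped NNReal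

theorem MeasureTheory.Measure.pi_withDensity_ofReal {ι : Type*} [Fintype ι] {X : ι → Type*}
    [∀ i, MeasurableSpace (X i)] (μ : ∀ i, Measure (X i)) [∀ i, SigmaFinite (μ i)]
    {f : ∀ i, X i → ℝ} (hf : ∀ i, Integrable (f i) (μ i)) (hf₀ : ∀ i, 0 ≤ f i) :
    Measure.pi (fun i => (μ i).withDensity fun x => ENNReal.ofReal (f i x)) =
      (Measure.pi μ).withDensity fun x => ∏ i, ENNReal.ofReal (f i (x i)) := by
  refine Measure.pi_eq fun s hs => ?_
  have hprod₀ : ∀ x : ∀ i, X i, 0 ≤ ∏ i, f i (x i) := fun x => prod_nonneg fun i _ => hf₀ i _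
  rw [withDensity_apply _ (MeasurableSet.univ_pi hs), Measure.restrict_pi_pi]
  simp_rw [← ENNReal.ofReal_prod_of_nonneg fun i _ => hf₀ i _]
  rw [← ofReal_integral_eq_lintegral_ofReal
      (Integrable.fintype_prod_dep fun i => (hf i).restrict) (ae_of_all _ hprod₀),
    integral_fintype_prod_eq_prod,
    ENNReal.ofReal_prod_of_nonneg fun i _ => integral_nonneg (hf₀ i)]
  refine prod_congr rfl fun i _ => ?_
  rw [withDensity_apply _ (hs i), ofReal_integral_eq_lintegral_ofReal (hf i).restrict
    (ae_of_all _ (hf₀ i))]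

noncomputable abbrev gaussianPi (ι : Type*) [Fintype ι] (v : ℝ≥0) : Measure (ι → ℝ) :=
  Measure.pi fun _ : ι => gaussianReal 0 v

theorem gaussianPi_eq_withDensity {ι : Type*} [Fintype ι] {v : ℝ≥0} (hv : v ≠ 0) :
    gaussianPi ι v = volume.withDensity fun x => ∏ i, gaussianPDF 0 v (x i) := by
  simp_rw [gaussianPi, gaussianReal_of_var_ne_zero 0 hv, gaussianPDF_def, volume_pi]
  exact Measure.pi_withDensity_ofReal _ (fun _ => integrable_gaussianPDFReal 0 v)
    fun _ => gaussianPDFReal_nonneg 0 v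

theorem prod_gaussianPDFReal {ι : Type*} [Fintype ι] (v : ℝ≥0) (x : ι → ℝ) :
    ∏ i, gaussianPDFReal 0 v (x i) =
      (√(2 * Real.pi * v) ^ Fintype.card ι)⁻¹ * Real.exp (-(∑ i, x i ^ 2) / (2 * v)) := by
  simp only [gaussianPDFReal, sub_zero, prod_mul_distrib, prod_const, inv_pow, ← Real.exp_sum,
    ← sum_div, sum_neg_distrib, card_univ]

theorem gAvg_eq_integral_gaussianPi {τ : ℝ} (hτ : τ ^ 2 < 1) {n : ℕ} (A : (Fin n → ℝ) → ℂ) :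
    gAvg τ n A = ∫ w, A w ∂gaussianPi (Fin n) (1 - τ ^ 2).toNNReal := by
  have hv : ((1 - τ ^ 2).toNNReal : ℝ) = 1 - τ ^ 2 := Real.coe_toNNReal _ (by linarith)
  rw [gaussianPi_eq_withDensity (by simpa using hτ),
    integral_withDensity_eq_integral_toReal_smul (by fun_prop)
      (ae_of_all _ fun _ => ENNReal.prod_lt_top fun _ _ => gaussianPDF_lt_top),
    gAvg, ← integral_const_mul]
  congr 1 with w
  simp only [ENNReal.toReal_prod, gaussianPDF,
    ENNReal.toReal_ofReal (gaussianPDFReal_nonneg _ _ _), prod_gaussianPDFReal, hv,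
    Fintype.card_fin, Complex.real_smul]
  push_cast
  ring

section gaussianPi
variable {ι : Type*} [Fintype ι] (v : ℝ≥0)

theorem memLp_eval_gaussianPi (i : ι) : MemLp (fun w => w i) 2 (gaussianPi ι v) :=
  (memLp_id_gaussianReal 2).comp_measurePreserving (measurePreserving_eval _ i)

theorem integrable_eval_gaussianPi (i : ι) : Integrable (fun w => w i) (gaussianPi ι v) :=
  (memLp_eval_gaussianPi v i).integrable one_le_two

theorem integral_eval_gaussianPi (i : ι) : ∫ w, w i ∂gaussianPi ι v = 0 := by
  simp [integral_eval]

theorem integral_eval_mul_eval_gaussianPi [DecidableEq ι] (i j : ι) :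
    ∫ w, w i * w j ∂gaussianPi ι v = if i = j then (v : ℝ) else 0 := by
  split_ifs with hij
  · subst hij
    rw [integral_comp_eval (μ := fun _ : ι => gaussianReal 0 v) (f := fun x : ℝ => x * x)
      (by fun_prop)]
    have hvar := variance_fun_id_gaussianReal (μ := 0) (v := v)
    rw [variance_of_integral_eq_zero aemeasurable_id' integral_id_gaussianReal] at hvar
    simpa [← sq] using hvar
  · rw [IndepFun.integral_fun_mul_eq_mul_integral
      ((iIndepFun_pi (X := fun _ x => x) fun _ => aemeasurable_id).indepFun hij)
      (measurable_pi_apply i).aestronglyMeasurable (measurable_pi_apply j).aestronglyMeasurable]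
    simp [integral_eval_gaussianPi]

theorem integrable_affine_mul_affine_gaussianPi (i j : ι) (p q r s : ℂ) :
    Integrable (fun w => (p + q * w i) * (r + s * w j)) (gaussianPi ι v) := by
  have haffine : ∀ k (a b : ℂ), MemLp (fun w : ι → ℝ => a + b * w k) 2 (gaussianPi ι v) :=
    fun k a b => (memLp_const a).add ((memLp_eval_gaussianPi v k).ofReal.const_mul b)
  exact (haffine i p q).integrable_mul (haffine j r s)

theorem integral_affine_mul_affine_gaussianPi [DecidableEq ι] (i j : ι) (p q r s : ℂ) :
    ∫ w, (p + q * w i) * (r + s * w j) ∂gaussianPi ι v =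
      p * r + q * s * if i = j then (v : ℂ) else 0 := by
  have hi : Integrable (fun w : ι → ℝ => (w i : ℂ)) (gaussianPi ι v) :=
    (integrable_eval_gaussianPi v i).ofReal
  have hj : Integrable (fun w : ι → ℝ => (w j : ℂ)) (gaussianPi ι v) :=
    (integrable_eval_gaussianPi v j).ofReal
  have hint₂ : Integrable (fun w : ι → ℝ => ((w i * w j : ℝ) : ℂ)) (gaussianPi ι v) :=
    ((memLp_eval_gaussianPi v i).integrable_mul (memLp_eval_gaussianPi v j)).ofReal
  have hexpand : (fun w : ι → ℝ => (p + q * w i) * (r + s * w j)) = fun w =>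
      p * r + (p * s * (w j : ℂ) + (q * r * (w i : ℂ) + q * s * ((w i * w j : ℝ) : ℂ))) := by
    funext w; push_cast; ring
  rw [hexpand, integral_add (integrable_const _) (by fun_prop),
    integral_add (by fun_prop) (by fun_prop), integral_add (by fun_prop) (by fun_prop)]
  simp only [integral_const, integral_const_mul, integral_complex_ofReal, integral_eval_gaussianPi,
    integral_eval_mul_eval_gaussianPi]
  split_ifs <;> simp

theorem integral_bilinear_gaussianPi (a q s : ℂ) (p r : ι → ℂ) (R : Matrix ι ι ℂ) :
    ∫ w, a + ∑ i, ∑ j, (p i + q * w i) * R i j * (r j + s * w j) ∂gaussianPi ι v =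
      a + ∑ i, ∑ j, p i * R i j * r j + q * s * v * R.trace := by
  classical
  have hint (i j : ι) : Integrable
      (fun w : ι → ℝ => (p i + q * w i) * R i j * (r j + s * w j)) (gaussianPi ι v) := by
    simpa only [mul_right_comm _ (R i j)] using
      (integrable_affine_mul_affine_gaussianPi v i j (p i) q (r j) s).mul_const (R i j)
  have hterm (i j : ι) : ∫ w, (p i + q * w i) * R i j * (r j + s * w j) ∂gaussianPi ι v =
      (p i * r j + q * s * if i = j then (v : ℂ) else 0) * R i j := by
    simp only [mul_right_comm _ (R i j), integral_mul_const,
      integral_affine_mul_affine_gaussianPi]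
  rw [integral_add (integrable_const a) (integrable_finsetSum _ fun i _ =>
      integrable_finsetSum _ fun j _ => hint i j),
    integral_finsetSum _ fun i _ => integrable_finsetSum _ fun j _ => hint i j]
  simp only [integral_const, probReal_univ, one_smul, integral_finsetSum _ fun j _ => hint _ j,
    hterm]
  simp only [add_mul, sum_add_distrib, mul_assoc, ite_mul, zero_mul, mul_ite, mul_zero,
    sum_ite_eq, mem_univ, if_true, trace, diag_apply, ← mul_sum, mul_comm (r _) (R _ _)]
  ring

end gaussianPi

theorem overlap_coefficients {b c y δ c₁ c₂ : ℝ} (hc : 0 < c) (hbc : c ≤ b)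
    (hy : y = Real.sqrt (b * c)) (hδ : δ = b - c)
    (hc₁ : c₁ = (1 / 4) * (2 + (δ ^ 2 + 2 * y ^ 2) / y ^ 2))
    (hc₂ : c₂ = (1 / 2) * (1 + c / b)) :
    (1 / 2) * (2 + δ ^ 2 / (2 * y ^ 2)) = c₁ ∧ c₂ / 2 * (b / c + 1) = c₁ := by
  have hb : 0 < b := hc.trans_le hbc
  have hy2 : y ^ 2 = b * c := by rw [hy, Real.sq_sqrt (mul_pos hb hc).le]
  subst hc₁ hc₂ hδ
  rw [hy2]
  constructor <;> field_simp <;> ring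

theorem gaussian_average_overlap_bilinear_general
    (τ : ℝ) (hτ : τ ∈ Set.Ico (0 : ℝ) 1) (n : ℕ)
    (b c : ℝ) (hc : 0 < c) (hbc : c ≤ b)
    (y δ : ℝ) (hy : y = Real.sqrt (b * c)) (hδ : δ = b - c)
    (B : Matrix (Fin n) (Fin n) ℂ)
    (c₁ c₂ : ℝ)
    (hc₁ : c₁ = (1 / 4) * (2 + (δ ^ 2 + 2 * y ^ 2) / y ^ 2))
    (hc₂ : c₂ = (1 / 2) * (1 + c / b))
    (S : (Fin n → ℝ) → (Fin n → ℝ) → ℂ)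
    (hS : S = fun w₁ w₂ => (1 / 2 : ℂ) * ∑ i, ∑ j,
      (((w₁ i : ℝ) : ℂ) - Complex.I * (Real.sqrt (b / c) : ℝ) * ((w₂ i : ℝ) : ℂ)) *
        (B⁻¹) i j *
      (((w₁ j : ℝ) : ℂ) + Complex.I * (Real.sqrt (b / c) : ℝ) * ((w₂ j : ℝ) : ℂ))) :
    gAvg τ n (fun w₁ => gAvg τ n (fun w₂ => (c₁ : ℂ) + (c₂ : ℂ) * S w₁ w₂)) =
      (1 / 2 : ℂ) * ((2 : ℂ) + (δ ^ 2 : ℝ) / ((2 * y ^ 2 : ℝ) : ℂ)) *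
        (1 + ((1 - τ ^ 2 : ℝ) : ℂ) * (B⁻¹).trace) := by
  have hτ' : τ ^ 2 < 1 := by nlinarith [hτ.1, hτ.2]
  set v := (1 - τ ^ 2).toNNReal
  set κ : ℂ := ((Real.sqrt (b / c) : ℝ) : ℂ)
  set R : Matrix (Fin n) (Fin n) ℂ := ((c₂ : ℂ) / 2) • B⁻¹
  have hinner (w₁ : Fin n → ℝ) : gAvg τ n (fun w₂ => (c₁ : ℂ) + c₂ * S w₁ w₂) =
      c₁ + κ ^ 2 * v * R.trace + ∑ i, ∑ j, (w₁ i : ℂ) * R i j * w₁ j := by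
    calc _ = ∫ w₂, (c₁ : ℂ) + ∑ i, ∑ j, (w₁ i + -(Complex.I * κ) * w₂ i) * R i j *
          (w₁ j + Complex.I * κ * w₂ j) ∂gaussianPi (Fin n) v := by
          rw [gAvg_eq_integral_gaussianPi hτ']
          congr 1 with w₂
          simp only [hS, R, mul_sum, Matrix.smul_apply, smul_eq_mul]
          exact congrArg _ (sum_congr rfl fun i _ => sum_congr rfl fun j _ => by ring)
      _ = _ := by
          rw [integral_bilinear_gaussianPi]
          linear_combination (-κ ^ 2 * v * R.trace) * Complex.I_sq
  have houter := integral_bilinear_gaussianPi v (c₁ + κ ^ 2 * v * R.trace) 1 1 0 0 R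
  simp only [Pi.zero_apply, zero_add, one_mul, zero_mul, mul_zero, sum_const_zero,
    add_zero] at houter
  simp only [hinner, gAvg_eq_integral_gaussianPi hτ']
  rw [houter, trace_smul, smul_eq_mul]
  obtain ⟨hconst, hslope⟩ := overlap_coefficients hc hbc hy hδ hc₁ hc₂
  have hκ : κ ^ 2 = ((b / c : ℝ) : ℂ) := by
    rw [← Complex.ofReal_pow, Real.sq_sqrt (div_nonneg (hc.le.trans hbc) hc.le)]
  rw [hκ, Real.coe_toNNReal _ (by linarith)]
  apply_fun ((↑) : ℝ → ℂ) at hconst hslope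
  push_cast at hconst hslope ⊢
  linear_combination (-1 - (1 - τ ^ 2) * B⁻¹.trace) * hconst + (1 - τ ^ 2) * B⁻¹.trace * hslope

theorem gaussian_average_overlap_bilinear
    (τ : ℝ) (hτ : τ ∈ Set.Ico (0 : ℝ) 1) (n : ℕ) (hn : 1 ≤ n)
    (b c : ℝ) (hc : 0 < c) (hbc : c ≤ b)
    (y δ : ℝ) (hy : y = Real.sqrt (b * c)) (hδ : δ = b - c)
    (x : ℝ) (z : ℂ) (hz : z = (x : ℂ) + Complex.I * (y : ℂ))
    (X₂ : Matrix (Fin n) (Fin n) ℝ)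
    (M : Matrix (Fin n) (Fin n) ℂ)
    (hM : M = z • (1 : Matrix (Fin n) (Fin n) ℂ) - X₂.map (fun a => (a : ℂ)))
    (hMunit : IsUnit M.det)
    (B : Matrix (Fin n) (Fin n) ℂ) (hB : B = Mᴴ * M)
    (c₁ c₂ : ℝ)
    (hc₁ : c₁ = (1 / 4) * (2 + (δ ^ 2 + 2 * y ^ 2) / y ^ 2))
    (hc₂ : c₂ = (1 / 2) * (1 + c / b))
    (S : (Fin n → ℝ) → (Fin n → ℝ) → ℂ)
    (hS : S = fun w₁ w₂ => (1 / 2 : ℂ) * ∑ i, ∑ j,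
      (((w₁ i : ℝ) : ℂ) - Complex.I * (Real.sqrt (b / c) : ℝ) * ((w₂ i : ℝ) : ℂ)) *
        (B⁻¹) i j *
      (((w₁ j : ℝ) : ℂ) + Complex.I * (Real.sqrt (b / c) : ℝ) * ((w₂ j : ℝ) : ℂ))) :
    gAvg τ n (fun w₁ => gAvg τ n (fun w₂ => (c₁ : ℂ) + (c₂ : ℂ) * S w₁ w₂)) =
      (1 / 2 : ℂ) * ((2 : ℂ) + (δ ^ 2 : ℝ) / ((2 * y ^ 2 : ℝ) : ℂ)) *
        (1 + ((1 - τ ^ 2 : ℝ) : ℂ) * (B⁻¹).trace) :=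
  gaussian_average_overlap_bilinear_general τ hτ n b c hc hbc y δ hy hδ B c₁ c₂ hc₁ hc₂ S hS
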